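/- arXiv:2411.13508 — 7 statements merged into one kernel-verified Lean document; each statement's English description precedes it below -/
import Mathlib

section
/- Let K ≥ 2 be an integer, β = 1/(1+K²), and c₀ = 1 − β. (a) For all a, b ∈ ℝ, the function u(x) = a·cos(x) + b·cos(Kx) satisfies c₀·u(x) + u''(x) + β·u''''(x) = 0 for all x ∈ ℝ. (b) Conversely, if u : ℝ → ℝ is C^∞, even, 2π-periodic, and satisfies c₀·u(x) + u''(x) + β·u''''(x) = 0 for all x, then u(x) = a·cos(x) + b·cos(Kx) for all x, where a = (1/π)∫_{−π}^{π} u(y) cos(y) dy and b = (1/π)∫_{−π}^{π} u(y) cos(Ky) dy. -/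
open Real

/-- The k-th Fourier cosine coefficient `(1/π) ∫_{-π}^{π} f(x) cos(kx) dx`. -/
noncomputable def cosCoeff (f : ℝ → ℝ) (k : ℕ) : ℝ :=
  (1 / Real.pi) * ∫ x in (-Real.pi)..Real.pi, f x * Real.cos (k * x)

/- ### Auxiliary lemmas -/

lemma iter2 (f : ℝ → ℝ) : iteratedDeriv 2 f = deriv (deriv f) := by
  rw [iteratedDeriv_eq_iterate]; rfl

lemma iter4 (f : ℝ → ℝ) : iteratedDeriv 4 f = deriv (deriv (deriv (deriv f))) := by
  rw [iteratedDeriv_eq_iterate]; rfl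

lemma hasDerivAt_cosc (c x : ℝ) :
    HasDerivAt (fun y => Real.cos (c * y)) (-(c * Real.sin (c * x))) x := by
  have h := (Real.hasDerivAt_cos (c * x)).comp x ((hasDerivAt_id x).const_mul c)
  exact h.congr_deriv (by ring)

lemma hasDerivAt_sinc (c x : ℝ) :
    HasDerivAt (fun y => Real.sin (c * y)) (c * Real.cos (c * x)) x := by
  have h := (Real.hasDerivAt_sin (c * x)).comp x ((hasDerivAt_id x).const_mul c)
  exact h.congr_deriv (by ring)

lemma deriv_combo_cos (a b c d : ℝ) :
    deriv (fun y => a * Real.cos (c * y) + b * Real.cos (d * y))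
      = fun y => (-(a * c)) * Real.sin (c * y) + (-(b * d)) * Real.sin (d * y) := by
  funext x
  have h := (((hasDerivAt_cosc c x).const_mul a).fun_add ((hasDerivAt_cosc d x).const_mul b)).deriv
  rw [h]; ring

lemma deriv_combo_sin (a b c d : ℝ) :
    deriv (fun y => a * Real.sin (c * y) + b * Real.sin (d * y))
      = fun y => (a * c) * Real.cos (c * y) + (b * d) * Real.cos (d * y) := by
  funext x
  have h := (((hasDerivAt_sinc c x).const_mul a).fun_add ((hasDerivAt_sinc d x).const_mul b)).deriv
  rw [h]; ring

/-- Energy argument: solutions of `w'' = -k² w` with zero initial data vanish. -/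
lemma osc_zero (k : ℝ) (hk : 0 < k) (w : ℝ → ℝ)
    (hw : Differentiable ℝ w) (hw' : Differentiable ℝ (deriv w))
    (hode : ∀ x, deriv (deriv w) x = -(k ^ 2) * w x)
    (h0 : w 0 = 0) (h0' : deriv w 0 = 0) : ∀ x, w x = 0 := by
  have hEdiff : Differentiable ℝ (fun x => (deriv w x) ^ 2 + k ^ 2 * (w x) ^ 2) :=
    (hw'.pow 2).add ((hw.pow 2).const_mul _)
  have hderiv : ∀ x, deriv (fun x => (deriv w x) ^ 2 + k ^ 2 * (w x) ^ 2) x = 0 := by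
    intro x
    have h1 := ((hw' x).hasDerivAt).fun_pow 2
    have h2 := (((hw x).hasDerivAt).fun_pow 2).const_mul (k ^ 2)
    rw [(h1.fun_add h2).deriv, hode x]
    ring
  have hconst := is_const_of_deriv_eq_zero hEdiff hderiv
  intro x
  have hx : (deriv w x) ^ 2 + k ^ 2 * (w x) ^ 2 = 0 := by
    have := hconst x 0
    simp only [h0, h0'] at this
    simpa using this
  have hw2 : w x ^ 2 = 0 := by
    nlinarith [sq_nonneg (deriv w x), sq_nonneg (w x), pow_pos hk 2]
  exact pow_eq_zero_iff (n := 2) (by norm_num) |>.mp hw2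

lemma diff_cosc (c : ℝ) : Differentiable ℝ (fun x : ℝ => Real.cos (c * x)) :=
  fun x => (hasDerivAt_cosc c x).differentiableAt

lemma diff_sinc (c : ℝ) : Differentiable ℝ (fun x : ℝ => Real.sin (c * x)) :=
  fun x => (hasDerivAt_sinc c x).differentiableAt

lemma cont_cosc (c : ℝ) : Continuous (fun x : ℝ => Real.cos (c * x)) :=
  Real.continuous_cos.comp (continuous_const.mul continuous_id)

lemma integral_cosc (c : ℝ) (hc : c ≠ 0) (hs : Real.sin (c * π) = 0) :
    ∫ x in (-π)..π, Real.cos (c * x) = 0 := by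
  rw [intervalIntegral.integral_comp_mul_left (fun x => Real.cos x) hc, integral_cos]
  have h2 : Real.sin (c * -π) = - Real.sin (c * π) := by rw [mul_neg, Real.sin_neg]
  rw [h2, hs]
  simp

/-- Orthogonality of the cosine family on `[-π, π]`. -/
lemma orth (m n : ℕ) (hm : 1 ≤ m) (hn : 1 ≤ n) :
    ∫ x in (-π)..π, Real.cos (m * x) * Real.cos (n * x)
      = if m = n then π else 0 := by
  have key : ∀ x : ℝ, Real.cos (m * x) * Real.cos (n * x)
      = (1 / 2) * Real.cos (((m : ℝ) - n) * x) + (1 / 2) * Real.cos (((m : ℝ) + n) * x) := by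
    intro x
    have h := Real.two_mul_cos_mul_cos ((m : ℝ) * x) ((n : ℝ) * x)
    have h1 : (m : ℝ) * x - n * x = ((m : ℝ) - n) * x := by ring
    have h2 : (m : ℝ) * x + n * x = ((m : ℝ) + n) * x := by ring
    rw [h1, h2] at h; linarith
  rw [intervalIntegral.integral_congr (g := fun x =>
      (1 / 2) * Real.cos (((m : ℝ) - n) * x) + (1 / 2) * Real.cos (((m : ℝ) + n) * x))
      (fun x _ => key x)]
  have hi1 : IntervalIntegrable (fun x => (1 / 2) * Real.cos (((m : ℝ) - n) * x))
      MeasureTheory.volume (-π) π := (continuous_const.mul (cont_cosc _)).intervalIntegrable _ _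
  have hi2 : IntervalIntegrable (fun x => (1 / 2) * Real.cos (((m : ℝ) + n) * x))
      MeasureTheory.volume (-π) π := (continuous_const.mul (cont_cosc _)).intervalIntegrable _ _
  rw [intervalIntegral.integral_add hi1 hi2, intervalIntegral.integral_const_mul,
    intervalIntegral.integral_const_mul]
  have hsum : ∫ x in (-π)..π, Real.cos (((m : ℝ) + n) * x) = 0 := by
    apply integral_cosc _ (by positivity)
    have : ((m : ℝ) + n) = ((m + n : ℕ) : ℝ) := by push_cast; ring
    rw [this]
    exact_mod_cast Real.sin_int_mul_pi (m + n : ℕ)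
  by_cases h : m = n
  · subst h
    simp only [sub_self, zero_mul, Real.cos_zero, if_pos rfl, hsum]
    rw [intervalIntegral.integral_const]
    simp; ring
  · have hne : ((m : ℝ) - n) ≠ 0 := by
      intro hcon
      exact h (Nat.cast_injective (by linarith [sub_eq_zero.mp hcon] : (m : ℝ) = n))
    have hdiff : ∫ x in (-π)..π, Real.cos (((m : ℝ) - n) * x) = 0 := by
      apply integral_cosc _ hne
      have : ((m : ℝ) - n) = ((m - n : ℤ) : ℝ) := by push_cast; ring
      rw [this]
      exact_mod_cast Real.sin_int_mul_pi (m - n : ℤ)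
    rw [hdiff, hsum, if_neg h]
    ring

/-- The kernel of the linearized Kawahara operator `c₀ + ∂ₓ² + β∂ₓ⁴` on even 2π-periodic
smooth functions is exactly the span of cos(x) and cos(Kx). -/
theorem kawahara_linear_kernel (K : ℕ) (hK : 2 ≤ K) (β c₀ : ℝ)
    (hβ : β = 1 / (1 + (K : ℝ) ^ 2)) (hc₀ : c₀ = 1 - β) :
    -- (a) every a·cos(x) + b·cos(Kx) is in the kernel
    (∀ a b : ℝ, ∀ x : ℝ,
      c₀ * (a * Real.cos x + b * Real.cos (K * x))
        + iteratedDeriv 2 (fun y => a * Real.cos y + b * Real.cos (K * y)) x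
        + β * iteratedDeriv 4 (fun y => a * Real.cos y + b * Real.cos (K * y)) x = 0) ∧
    -- (b) conversely, every smooth, even, 2π-periodic kernel element has this form
    (∀ u : ℝ → ℝ,
      ContDiff ℝ (⊤ : ℕ∞) u →
      (∀ x : ℝ, u (-x) = u x) →
      Function.Periodic u (2 * Real.pi) →
      (∀ x : ℝ, c₀ * u x + iteratedDeriv 2 u x + β * iteratedDeriv 4 u x = 0) →
      ∀ x : ℝ, u x = cosCoeff u 1 * Real.cos x + cosCoeff u K * Real.cos (K * x)) := by
  have hne : (1 : ℝ) + (K : ℝ) ^ 2 ≠ 0 := by positivity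
  constructor
  · -- part (a)
    intro a b x
    have hf : (fun y => a * Real.cos y + b * Real.cos (K * y))
        = fun y => a * Real.cos ((1 : ℝ) * y) + b * Real.cos ((K : ℝ) * y) := by
      funext y; rw [one_mul]
    rw [hf]
    simp only [iter2, iter4, deriv_combo_cos, deriv_combo_sin]
    subst hβ hc₀
    simp only [one_mul]
    field_simp
    ring
  · -- part (b)
    intro u hu heven _hper hode
    have hKR : (2 : ℝ) ≤ (K : ℝ) := by exact_mod_cast hK
    have hK0 : (0 : ℝ) < (K : ℝ) := by linarith
    have hK1 : (K : ℝ) ^ 2 - 1 ≠ 0 := by nlinarith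
    have hβne : β ≠ 0 := by rw [hβ]; positivity
    have hb1 : β * (1 + (K : ℝ) ^ 2) = 1 := by rw [hβ]; field_simp
    -- differentiability ladder
    have hu' : ContDiff ℝ (↑(⊤ : ℕ∞)) u := hu.of_le (by simp)
    have hle : (1 : WithTop ℕ∞) ≤ ↑(⊤ : ℕ∞) := by exact_mod_cast le_top
    have d0 : Differentiable ℝ u := hu'.differentiable (by simp)
    have c1 : ContDiff ℝ (↑(⊤ : ℕ∞)) (deriv u) := (contDiff_infty_iff_deriv.mp hu').2
    have d1 : Differentiable ℝ (deriv u) := c1.differentiable (by simp)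
    have c2 : ContDiff ℝ (↑(⊤ : ℕ∞)) (deriv (deriv u)) := (contDiff_infty_iff_deriv.mp c1).2
    have d2 : Differentiable ℝ (deriv (deriv u)) := c2.differentiable (by simp)
    have c3 : ContDiff ℝ (↑(⊤ : ℕ∞)) (deriv (deriv (deriv u))) := (contDiff_infty_iff_deriv.mp c2).2
    have d3 : Differentiable ℝ (deriv (deriv (deriv u))) := c3.differentiable (by simp)
    -- ODE in deriv form
    have hode2 : ∀ x, c₀ * u x + deriv (deriv u) x
        + β * deriv (deriv (deriv (deriv u))) x = 0 := by
      intro x; have h := hode x; rwa [iter2, iter4] at h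
    -- parity facts
    have hodd1 : ∀ x, deriv u (-x) = -deriv u x := by
      intro x
      have h := deriv_comp_neg (f := u) (x := x)
      rw [show (fun x => u (-x)) = u from funext heven] at h
      linarith
    have h1z : deriv u 0 = 0 := by
      have := hodd1 0; simp only [neg_zero] at this; linarith
    have heven2 : ∀ x, deriv (deriv u) (-x) = deriv (deriv u) x := by
      intro x
      have h := deriv_comp_neg (f := deriv u) (x := x)
      rw [show (fun x => deriv u (-x)) = fun x => -deriv u x from funext hodd1] at h
      rw [deriv.fun_neg] at h
      linarith
    have h3z : deriv (deriv (deriv u)) 0 = 0 := by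
      have h := deriv_comp_neg (f := deriv (deriv u)) (x := 0)
      rw [show (fun x => deriv (deriv u) (-x)) = deriv (deriv u) from funext heven2] at h
      simp only [neg_zero] at h
      linarith
    -- key fourth-derivative identity
    have key : ∀ x, deriv (deriv (deriv (deriv u))) x + (K : ℝ) ^ 2 * deriv (deriv u) x
        = -(deriv (deriv u) x + (K : ℝ) ^ 2 * u x) := by
      intro x
      apply mul_left_cancel₀ hβne
      have h := hode2 x
      have hc : c₀ = β * (K : ℝ) ^ 2 := by
        rw [hc₀]; linear_combination (-1 : ℝ) * hb1
      rw [hc] at h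
      linear_combination h + deriv (deriv u) x * hb1
    set A := deriv (deriv u) 0 + (K : ℝ) ^ 2 * u 0 with hA
    -- the function v - A cos x, v = u'' + K² u, solves w'' = -w with zero data
    have hdw : ∀ x, HasDerivAt
        (fun y => (deriv (deriv u) y + (K : ℝ) ^ 2 * u y) - A * Real.cos y)
        ((deriv (deriv (deriv u)) x + (K : ℝ) ^ 2 * deriv u x) + A * Real.sin x) x := by
      intro x
      have h := (((d2 x).hasDerivAt).fun_add (((d0 x).hasDerivAt).const_mul ((K : ℝ) ^ 2))).fun_sub
        ((Real.hasDerivAt_cos x).const_mul A)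
      exact h.congr_deriv (by ring)
    have hdw1 : deriv (fun y => (deriv (deriv u) y + (K : ℝ) ^ 2 * u y) - A * Real.cos y)
        = fun x => (deriv (deriv (deriv u)) x + (K : ℝ) ^ 2 * deriv u x) + A * Real.sin x :=
      funext fun x => (hdw x).deriv
    have hdw2 : ∀ x, deriv (deriv
        (fun y => (deriv (deriv u) y + (K : ℝ) ^ 2 * u y) - A * Real.cos y)) x
        = -((1 : ℝ) ^ 2) * ((deriv (deriv u) x + (K : ℝ) ^ 2 * u x) - A * Real.cos x) := by
      intro x
      rw [hdw1]
      have h := (((d3 x).hasDerivAt).fun_add (((d1 x).hasDerivAt).const_mul ((K : ℝ) ^ 2))).fun_add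
        ((Real.hasDerivAt_sin x).const_mul A)
      rw [h.deriv]
      linear_combination key x
    have hv : ∀ x, (deriv (deriv u) x + (K : ℝ) ^ 2 * u x) - A * Real.cos x = 0 := by
      apply osc_zero 1 one_pos _
        ((d2.fun_add (d0.const_mul _)).fun_sub (Real.differentiable_cos.const_mul A))
        (by rw [hdw1]
            exact (d3.fun_add (d1.const_mul _)).fun_add (Real.differentiable_sin.const_mul A))
        hdw2
      · simp [hA]
      · rw [hdw1]; simp [h1z, h3z]
    set a := A / ((K : ℝ) ^ 2 - 1) with ha
    set b := u 0 - a with hb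
    have hAa : A = ((K : ℝ) ^ 2 - 1) * a := by
      rw [ha]; field_simp
    -- p = u - a cos x - b cos(Kx) solves p'' = -K² p with zero data
    have hdp : ∀ x, HasDerivAt
        (fun y => u y - a * Real.cos y - b * Real.cos ((K : ℝ) * y))
        (deriv u x + a * Real.sin x + b * ((K : ℝ) * Real.sin ((K : ℝ) * x))) x := by
      intro x
      have h := (((d0 x).hasDerivAt).fun_sub ((Real.hasDerivAt_cos x).const_mul a)).fun_sub
        ((hasDerivAt_cosc (K : ℝ) x).const_mul b)
      exact h.congr_deriv (by ring)
    have hdp1 : deriv (fun y => u y - a * Real.cos y - b * Real.cos ((K : ℝ) * y))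
        = fun x => deriv u x + a * Real.sin x + b * ((K : ℝ) * Real.sin ((K : ℝ) * x)) :=
      funext fun x => (hdp x).deriv
    have hdp2 : ∀ x, deriv (deriv
        (fun y => u y - a * Real.cos y - b * Real.cos ((K : ℝ) * y))) x
        = -((K : ℝ) ^ 2) * (u x - a * Real.cos x - b * Real.cos ((K : ℝ) * x)) := by
      intro x
      rw [hdp1]
      have h := (((d1 x).hasDerivAt).fun_add ((Real.hasDerivAt_sin x).const_mul a)).fun_add
        (((hasDerivAt_sinc (K : ℝ) x).const_mul (K : ℝ)).const_mul b)
      rw [h.deriv]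
      linear_combination hv x + Real.cos x * hAa
    have hp : ∀ x, u x - a * Real.cos x - b * Real.cos ((K : ℝ) * x) = 0 := by
      apply osc_zero (K : ℝ) hK0 _
        ((d0.fun_sub (Real.differentiable_cos.const_mul a)).fun_sub ((diff_cosc (K : ℝ)).const_mul b))
        (by rw [hdp1]
            exact (d1.fun_add (Real.differentiable_sin.const_mul a)).fun_add
              (((diff_sinc (K : ℝ)).const_mul (K : ℝ)).const_mul b))
        hdp2
      · simp [hb]
      · rw [hdp1]; simp [h1z]
    have hup : ∀ x, u x = a * Real.cos x + b * Real.cos ((K : ℝ) * x) := by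
      intro x; have := hp x; linarith
    -- identify the Fourier coefficients
    have hcc : ∀ n : ℕ, 1 ≤ n → cosCoeff u n
        = (1 / π) * (a * (∫ x in (-π)..π, Real.cos ((1 : ℕ) * x) * Real.cos (n * x))
            + b * (∫ x in (-π)..π, Real.cos ((K : ℕ) * x) * Real.cos (n * x))) := by
      intro n hn
      unfold cosCoeff
      congr 1
      rw [intervalIntegral.integral_congr (g := fun x =>
          a * (Real.cos ((1 : ℕ) * x) * Real.cos (n * x))
            + b * (Real.cos ((K : ℕ) * x) * Real.cos (n * x)))
        (fun x _ => by rw [hup x]; push_cast; ring)]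
      rw [intervalIntegral.integral_add
          ((continuous_const.fun_mul ((cont_cosc _).fun_mul (cont_cosc _))).intervalIntegrable _ _)
          ((continuous_const.fun_mul ((cont_cosc _).fun_mul (cont_cosc _))).intervalIntegrable _ _),
        intervalIntegral.integral_const_mul, intervalIntegral.integral_const_mul]
    have hK1' : (1 : ℕ) ≠ K := by omega
    have hca : cosCoeff u 1 = a := by
      rw [hcc 1 le_rfl, orth 1 1 le_rfl le_rfl, orth K 1 (by omega) le_rfl,
        if_pos rfl, if_neg (by omega)]
      field_simp
      ring
    have hcb : cosCoeff u K = b := by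
      rw [hcc K (by omega), orth 1 K le_rfl (by omega), orth K K (by omega) (by omega),
        if_pos rfl, if_neg hK1']
      field_simp
      ring
    intro x
    rw [hca, hcb]
    exact hup x
end

section
/- Let K ≥ 3 be an integer, β = 1/(1+K²), and c₀ = 1 − β. Define u₂₀₀(x) = −1/(2c₀) − cos(2x)/(2(c₀ − 4 + 16β)), u₁₁₀(x) = −cos((K−1)x)/(c₀ − (K−1)² + β(K−1)⁴) − cos((K+1)x)/(c₀ − (K+1)² + β(K+1)⁴), and u₀₂₀(x) = −1/(2c₀) − cos(2Kx)/(2(c₀ − 4K² + 16βK⁴)). Then all denominators appearing are nonzero, each of the three functions is C^∞, even, 2π-periodic, has vanishing first and K-th Fourier cosine coefficients, and they satisfy, for all x ∈ ℝ: c₀·u₂₀₀ + u₂₀₀'' + β·u₂₀₀'''' = −cos(x)², c₀·u₁₁₀ + u₁₁₀'' + β·u₁₁₀'''' = −2·cos(x)·cos(Kx), and c₀·u₀₂₀ + u₀₂₀'' + β·u₀₂₀'''' = −cos(Kx)². -/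
open Real

lemma myI1 (n : ℤ) (hn : n ≠ 0) : (∫ x in (-Real.pi)..Real.pi, Real.cos (n * x)) = 0 := by
  have hn' : ((n : ℝ)) ≠ 0 := Int.cast_ne_zero.mpr hn
  rw [intervalIntegral.integral_comp_mul_left Real.cos hn']
  simp [integral_cos, mul_neg, Real.sin_int_mul_pi]

lemma myI2 (a b : ℤ) (h1 : a - b ≠ 0) (h2 : a + b ≠ 0) :
    (∫ x in (-Real.pi)..Real.pi, Real.cos (a * x) * Real.cos (b * x)) = 0 := by
  have e : ∀ x : ℝ, Real.cos (a * x) * Real.cos (b * x)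
      = Real.cos (((a - b : ℤ) : ℝ) * x) / 2 + Real.cos (((a + b : ℤ) : ℝ) * x) / 2 := by
    intro x
    push_cast
    rw [sub_mul, add_mul, Real.cos_sub, Real.cos_add]
    ring
  rw [intervalIntegral.integral_congr (fun x _ => e x)]
  have c1 : Continuous fun x : ℝ => Real.cos (((a - b : ℤ) : ℝ) * x) / 2 := by fun_prop
  have c2 : Continuous fun x : ℝ => Real.cos (((a + b : ℤ) : ℝ) * x) / 2 := by fun_prop
  rw [intervalIntegral.integral_add (c1.intervalIntegrable _ _) (c2.intervalIntegrable _ _)]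
  rw [intervalIntegral.integral_div, intervalIntegral.integral_div, myI1 _ h1, myI1 _ h2]
  norm_num

lemma myCos2 : iteratedDeriv 2 Real.cos = fun x => -Real.cos x := by
  rw [show (2:ℕ) = 1+1 from rfl, iteratedDeriv_succ, iteratedDeriv_one, Real.deriv_cos']
  funext x
  simp

lemma myCos4 : iteratedDeriv 4 Real.cos = Real.cos := by
  rw [show (4:ℕ) = 2+1+1 from rfl, iteratedDeriv_succ, iteratedDeriv_succ, myCos2]
  funext x
  simp

lemma myContDiffC (m : ℝ) (n : WithTop ℕ∞) : ContDiff ℝ n (fun x : ℝ => Real.cos (m * x)) :=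
  Real.contDiff_cos.comp (contDiff_const.mul contDiff_id)

lemma myContDiff (A m : ℝ) (n : WithTop ℕ∞) : ContDiff ℝ n (fun x : ℝ => A * Real.cos (m * x)) :=
  contDiff_const.mul (myContDiffC m n)

lemma myCmul {n : ℕ} {f : ℝ → ℝ} (hf : ContDiff ℝ n f) (c : ℝ) (x : ℝ) :
    iteratedDeriv n (fun y => c * f y) x = c * iteratedDeriv n f x := by
  simp_rw [← iteratedDerivWithin_univ]
  exact iteratedDerivWithin_const_mul (Set.mem_univ x) uniqueDiffOn_univ c hf.contDiffAt.contDiffWithinAt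

lemma myAdd {n : ℕ} {f g : ℝ → ℝ} (hf : ContDiff ℝ n f) (hg : ContDiff ℝ n g) (x : ℝ) :
    iteratedDeriv n (fun y => f y + g y) x = iteratedDeriv n f x + iteratedDeriv n g x := by
  simp_rw [← iteratedDerivWithin_univ]
  exact iteratedDerivWithin_add (Set.mem_univ x) uniqueDiffOn_univ hf.contDiffAt.contDiffWithinAt hg.contDiffAt.contDiffWithinAt

lemma myIt2 (A m x : ℝ) :
    iteratedDeriv 2 (fun x => A * Real.cos (m * x)) x = -(A * m ^ 2 * Real.cos (m * x)) := by
  rw [myCmul (myContDiffC m _) A,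
    iteratedDeriv_comp_const_mul Real.contDiff_cos m]
  rw [myCos2]
  ring

lemma myIt4 (A m x : ℝ) :
    iteratedDeriv 4 (fun x => A * Real.cos (m * x)) x = A * m ^ 4 * Real.cos (m * x) := by
  rw [myCmul (myContDiffC m _) A,
    iteratedDeriv_comp_const_mul Real.contDiff_cos m]
  rw [myCos4]
  ring

lemma myGeneric (c₀ β A B : ℝ) (a b : ℕ) (u : ℝ → ℝ)
    (hu : ∀ x, u x = A * Real.cos ((a : ℝ) * x) + B * Real.cos ((b : ℝ) * x)) :
    ContDiff ℝ (⊤ : ℕ∞) u ∧ (∀ x : ℝ, u (-x) = u x) ∧ Function.Periodic u (2 * Real.pi) ∧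
    (∀ k : ℕ, k ≠ 0 → a ≠ k → b ≠ k → cosCoeff u k = 0) ∧
    (∀ x : ℝ, c₀ * u x + iteratedDeriv 2 u x + β * iteratedDeriv 4 u x
      = A * (c₀ - (a : ℝ) ^ 2 + β * (a : ℝ) ^ 4) * Real.cos ((a : ℝ) * x)
        + B * (c₀ - (b : ℝ) ^ 2 + β * (b : ℝ) ^ 4) * Real.cos ((b : ℝ) * x)) := by
  have hu' : u = fun x => A * Real.cos ((a : ℝ) * x) + B * Real.cos ((b : ℝ) * x) :=
    funext hu
  subst hu'
  refine ⟨?_, ?_, ?_, ?_, ?_⟩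
  · exact (myContDiff A a _).add (myContDiff B b _)
  · intro x; simp [mul_neg, Real.cos_neg]
  · intro x
    have ha := Real.cos_add_int_mul_two_pi ((a : ℝ) * x) a
    have hb := Real.cos_add_int_mul_two_pi ((b : ℝ) * x) b
    push_cast at ha hb
    simp only [mul_add]
    rw [ha, hb]
  · intro k hk hak hbk
    have e : ∀ x : ℝ, (A * Real.cos ((a : ℝ) * x) + B * Real.cos ((b : ℝ) * x))
        * Real.cos ((k : ℝ) * x)
        = A * (Real.cos (((a : ℤ) : ℝ) * x) * Real.cos (((k : ℤ) : ℝ) * x))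
          + B * (Real.cos (((b : ℤ) : ℝ) * x) * Real.cos (((k : ℤ) : ℝ) * x)) := by
      intro x; push_cast; ring
    have c1 : Continuous fun x : ℝ =>
        A * (Real.cos (((a : ℤ) : ℝ) * x) * Real.cos (((k : ℤ) : ℝ) * x)) := by fun_prop
    have c2 : Continuous fun x : ℝ =>
        B * (Real.cos (((b : ℤ) : ℝ) * x) * Real.cos (((k : ℤ) : ℝ) * x)) := by fun_prop
    unfold cosCoeff
    rw [intervalIntegral.integral_congr (fun x _ => e x),
      intervalIntegral.integral_add (c1.intervalIntegrable _ _) (c2.intervalIntegrable _ _),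
      intervalIntegral.integral_const_mul, intervalIntegral.integral_const_mul,
      myI2 _ _ (by omega) (by omega), myI2 _ _ (by omega) (by omega)]
    simp
  · intro x
    have h2 := myAdd (n := 2) (myContDiff A a 2) (myContDiff B b 2) x
    have h4 := myAdd (n := 4) (myContDiff A a 4) (myContDiff B b 4) x
    rw [h2, h4, myIt2, myIt2, myIt4, myIt4]
    ring

/-- The second-order Taylor coefficients of the auxiliary-equation solution in the
Lyapunov–Schmidt reduction for the Kawahara Wilton ripples, K ≥ 3. -/
theorem kawahara_second_order_coefficients (K : ℕ) (hK : 3 ≤ K) (β c₀ : ℝ)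
    (hβ : β = 1 / (1 + (K : ℝ) ^ 2)) (hc₀ : c₀ = 1 - β)
    (u200 u110 u020 : ℝ → ℝ)
    (hu200 : ∀ x : ℝ, u200 x =
      -1 / (2 * c₀) - Real.cos (2 * x) / (2 * (c₀ - 4 + 16 * β)))
    (hu110 : ∀ x : ℝ, u110 x =
      -Real.cos (((K : ℝ) - 1) * x) / (c₀ - ((K : ℝ) - 1) ^ 2 + β * ((K : ℝ) - 1) ^ 4)
      - Real.cos (((K : ℝ) + 1) * x) / (c₀ - ((K : ℝ) + 1) ^ 2 + β * ((K : ℝ) + 1) ^ 4))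
    (hu020 : ∀ x : ℝ, u020 x =
      -1 / (2 * c₀) - Real.cos (2 * (K : ℝ) * x)
        / (2 * (c₀ - 4 * (K : ℝ) ^ 2 + 16 * β * (K : ℝ) ^ 4))) :
    -- all denominators are nonzero
    c₀ ≠ 0 ∧ c₀ - 4 + 16 * β ≠ 0 ∧
    c₀ - ((K : ℝ) - 1) ^ 2 + β * ((K : ℝ) - 1) ^ 4 ≠ 0 ∧
    c₀ - ((K : ℝ) + 1) ^ 2 + β * ((K : ℝ) + 1) ^ 4 ≠ 0 ∧
    c₀ - 4 * (K : ℝ) ^ 2 + 16 * β * (K : ℝ) ^ 4 ≠ 0 ∧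
    -- regularity, parity, periodicity, and vanishing kernel modes
    (∀ u ∈ ({u200, u110, u020} : Set (ℝ → ℝ)),
      ContDiff ℝ (⊤ : ℕ∞) u ∧ (∀ x : ℝ, u (-x) = u x) ∧
      Function.Periodic u (2 * Real.pi) ∧
      cosCoeff u 1 = 0 ∧ cosCoeff u K = 0) ∧
    -- the three inhomogeneous linear equations
    (∀ x : ℝ, c₀ * u200 x + iteratedDeriv 2 u200 x + β * iteratedDeriv 4 u200 x
      = -(Real.cos x) ^ 2) ∧
    (∀ x : ℝ, c₀ * u110 x + iteratedDeriv 2 u110 x + β * iteratedDeriv 4 u110 x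
      = -2 * Real.cos x * Real.cos ((K : ℝ) * x)) ∧
    (∀ x : ℝ, c₀ * u020 x + iteratedDeriv 2 u020 x + β * iteratedDeriv 4 u020 x
      = -(Real.cos ((K : ℝ) * x)) ^ 2) := by
  have ht : (3 : ℝ) ≤ (K : ℝ) := by exact_mod_cast hK
  have hpos : (0 : ℝ) < 1 + (K : ℝ) ^ 2 := by positivity
  have key : ∀ m : ℝ, c₀ - m ^ 2 + β * m ^ 4
      = ((m ^ 2 - 1) * (m ^ 2 - (K : ℝ) ^ 2)) / (1 + (K : ℝ) ^ 2) := by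
    intro m; rw [hc₀, hβ]; field_simp; ring
  have hd0 : c₀ ≠ 0 := by
    have e : c₀ = (K : ℝ) ^ 2 / (1 + (K : ℝ) ^ 2) := by rw [hc₀, hβ]; field_simp; ring
    rw [e]; exact div_ne_zero (by nlinarith) (by positivity)
  have hd2 : c₀ - 4 + 16 * β ≠ 0 := by
    have e : c₀ - 4 + 16 * β
        = (((2:ℝ) ^ 2 - 1) * ((2:ℝ) ^ 2 - (K : ℝ) ^ 2)) / (1 + (K : ℝ) ^ 2) := by
      rw [← key 2]; ring
    rw [e]
    exact div_ne_zero (mul_ne_zero (by norm_num) (by nlinarith)) (by positivity)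
  have hd3 : c₀ - ((K : ℝ) - 1) ^ 2 + β * ((K : ℝ) - 1) ^ 4 ≠ 0 := by
    rw [key ((K : ℝ) - 1)]
    exact div_ne_zero (mul_ne_zero (by nlinarith) (by nlinarith)) (by positivity)
  have hd4 : c₀ - ((K : ℝ) + 1) ^ 2 + β * ((K : ℝ) + 1) ^ 4 ≠ 0 := by
    rw [key ((K : ℝ) + 1)]
    exact div_ne_zero (mul_ne_zero (by nlinarith) (by nlinarith)) (by positivity)
  have hd5 : c₀ - 4 * (K : ℝ) ^ 2 + 16 * β * (K : ℝ) ^ 4 ≠ 0 := by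
    have e : c₀ - 4 * (K : ℝ) ^ 2 + 16 * β * (K : ℝ) ^ 4
        = (((2 * (K : ℝ)) ^ 2 - 1) * ((2 * (K : ℝ)) ^ 2 - (K : ℝ) ^ 2)) / (1 + (K : ℝ) ^ 2) := by
      rw [← key (2 * (K : ℝ))]; ring
    rw [e]
    exact div_ne_zero (mul_ne_zero (by nlinarith) (by nlinarith)) (by positivity)
  -- the three representations
  have g200 := myGeneric c₀ β (-1 / (2 * c₀)) (-1 / (2 * (c₀ - 4 + 16 * β))) 0 2 u200
    (by intro x; rw [hu200 x]; push_cast; rw [zero_mul, Real.cos_zero]; ring)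
  have g110 := myGeneric c₀ β
    (-1 / (c₀ - ((K : ℝ) - 1) ^ 2 + β * ((K : ℝ) - 1) ^ 4))
    (-1 / (c₀ - ((K : ℝ) + 1) ^ 2 + β * ((K : ℝ) + 1) ^ 4)) (K - 1) (K + 1) u110
    (by
      intro x; rw [hu110 x]; push_cast [Nat.cast_sub (show 1 ≤ K by omega)]; ring)
  have g020 := myGeneric c₀ β (-1 / (2 * c₀))
    (-1 / (2 * (c₀ - 4 * (K : ℝ) ^ 2 + 16 * β * (K : ℝ) ^ 4))) 0 (2 * K) u020
    (by intro x; rw [hu020 x]; push_cast; rw [zero_mul, Real.cos_zero]; ring)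
  refine ⟨hd0, hd2, hd3, hd4, hd5, ?_, ?_, ?_, ?_⟩
  · intro u hu
    simp only [Set.mem_insert_iff, Set.mem_singleton_iff] at hu
    rcases hu with rfl | rfl | rfl
    · exact ⟨g200.1, g200.2.1, g200.2.2.1,
        g200.2.2.2.1 1 (by omega) (by omega) (by omega),
        g200.2.2.2.1 K (by omega) (by omega) (by omega)⟩
    · exact ⟨g110.1, g110.2.1, g110.2.2.1,
        g110.2.2.2.1 1 (by omega) (by omega) (by omega),
        g110.2.2.2.1 K (by omega) (by omega) (by omega)⟩
    · exact ⟨g020.1, g020.2.1, g020.2.2.1,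
        g020.2.2.2.1 1 (by omega) (by omega) (by omega),
        g020.2.2.2.1 K (by omega) (by omega) (by omega)⟩
  · intro x
    rw [g200.2.2.2.2 x]
    push_cast
    rw [zero_mul, Real.cos_zero, Real.cos_sq x]
    field_simp
    have e3 : c₀ - 2 ^ 2 + 2 ^ 4 * β = c₀ - 4 + β * 16 := by ring
    have hY : c₀ - 4 + β * 16 ≠ 0 := by rw [mul_comm β]; exact hd2
    rw [e3]
    field_simp
    ring
  · intro x
    rw [g110.2.2.2.2 x]
    push_cast [Nat.cast_sub (show 1 ≤ K by omega)]
    have hid : Real.cos (((K : ℝ) - 1) * x) + Real.cos (((K : ℝ) + 1) * x)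
        = 2 * Real.cos ((K : ℝ) * x) * Real.cos x := by
      rw [show ((K : ℝ) - 1) * x = (K : ℝ) * x - x by ring,
        show ((K : ℝ) + 1) * x = (K : ℝ) * x + x by ring, Real.cos_sub, Real.cos_add]
      ring
    have r1 : -1 / (c₀ - ((K : ℝ) - 1) ^ 2 + β * ((K : ℝ) - 1) ^ 4)
        * (c₀ - ((K : ℝ) - 1) ^ 2 + β * ((K : ℝ) - 1) ^ 4) = -1 := by
      rw [div_mul_cancel₀ _ hd3]
    have r2 : -1 / (c₀ - ((K : ℝ) + 1) ^ 2 + β * ((K : ℝ) + 1) ^ 4)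
        * (c₀ - ((K : ℝ) + 1) ^ 2 + β * ((K : ℝ) + 1) ^ 4) = -1 := by
      rw [div_mul_cancel₀ _ hd4]
    rw [r1, r2]
    linarith [hid]
  · intro x
    rw [g020.2.2.2.2 x]
    push_cast
    rw [zero_mul, Real.cos_zero, Real.cos_sq ((K : ℝ) * x)]
    have e2 : (2 : ℝ) * ((K : ℝ) * x) = 2 * (K : ℝ) * x := by ring
    rw [e2]
    field_simp
    have e3 : c₀ - 2 ^ 2 * (K : ℝ) ^ 2 + 2 ^ 4 * β * (K : ℝ) ^ 4
        = c₀ - 4 * (K : ℝ) ^ 2 + β * (K : ℝ) ^ 4 * 16 := by ring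
    have hY : c₀ - 4 * (K : ℝ) ^ 2 + β * (K : ℝ) ^ 4 * 16 ≠ 0 := by
      rw [show c₀ - 4 * (K : ℝ) ^ 2 + β * (K : ℝ) ^ 4 * 16
          = c₀ - 4 * (K : ℝ) ^ 2 + 16 * β * (K : ℝ) ^ 4 by ring]; exact hd5
    rw [e3]
    field_simp
    ring
end

section
/- Let β = 1/5, c₀ = 4/5, and let u₂₀₀(x) = −1/(2c₀), u₁₁₀(x) = −cos(3x)/(c₀ − 9 + 81β), u₀₂₀(x) = −1/(2c₀) − cos(4x)/(2(c₀ − 16 + 256β)). Then for all a, b ∈ ℝ: (1/π)∫_{−π}^{π} 2(a·cos(x) + b·cos(2x))·(a²·u₂₀₀(x) + ab·u₁₁₀(x) + b²·u₀₂₀(x))·cos(x) dx = −(5/4)a³ − (11/8)ab², and (1/π)∫_{−π}^{π} 2(a·cos(x) + b·cos(2x))·(a²·u₂₀₀(x) + ab·u₁₁₀(x) + b²·u₀₂₀(x))·cos(2x) dx = −(11/8)a²b − (91/72)b³. -/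
/-!
For β = 1/5 and c₀ = 4/5 the three denominators are 8/5, 8 and 36, so
a² u₂₀₀ + ab u₁₁₀ + b² u₀₂₀ = -(5/8)(a² + b²) - (ab/8) cos 3x - (b²/72) cos 4x.
Multiplying by 2(a cos x + b cos 2x) cos(mx) and expanding with the Chebyshev recursion gives a
cosine polynomial of degree at most 8, and integrating over a period keeps only 2π times its
constant term.
-/

open Real

theorem cos_nat_add_two_mul (n : ℕ) (x : ℝ) :
    cos ((n + 2 : ℕ) * x) = 2 * cos x * cos ((n + 1 : ℕ) * x) - cos (n * x) := by
  have h := two_mul_cos_mul_cos ((n + 1 : ℝ) * x) x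
  rw [show (n + 1 : ℝ) * x - x = n * x by ring,
    show (n + 1 : ℝ) * x + x = (n + 2) * x by ring] at h
  push_cast
  linarith

theorem integral_cos_nat_mul_eq_zero {n : ℕ} (hn : n ≠ 0) :
    ∫ x in -π..π, cos (n * x) = 0 := by
  rw [intervalIntegral.integral_comp_mul_left cos (Nat.cast_ne_zero.mpr hn), integral_cos,
    mul_neg, sin_neg, sin_nat_mul_pi]
  simp

theorem integral_sum_cos_nat_mul {N : ℕ} (c : Fin (N + 1) → ℝ) :
    ∫ x in -π..π, ∑ k, c k * cos ((k : ℕ) * x) = 2 * π * c 0 := by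
  have hcos (k : Fin N) : ∫ x in -π..π, cos ((k.succ : ℕ) * x) = 0 :=
    integral_cos_nat_mul_eq_zero (Fin.val_ne_zero_iff.mpr k.succ_ne_zero)
  rw [intervalIntegral.integral_finsetSum fun k _ =>
    (by fun_prop : Continuous _).intervalIntegrable _ _, Fin.sum_univ_succ]
  simp only [intervalIntegral.integral_const_mul, hcos, mul_zero, Finset.sum_const_zero, add_zero,
    Fin.val_zero, Nat.cast_zero, zero_mul, cos_zero, integral_one]
  ring

noncomputable def kawaharaU2 (a b x : ℝ) : ℝ :=
  -(5 / 8) * (a ^ 2 + b ^ 2) - a * b / 8 * cos (3 * x) - b ^ 2 / 72 * cos (4 * x)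

theorem two_mul_mul_kawaharaU2_mul_cos (a b x : ℝ) :
    2 * (a * cos x + b * cos (2 * x)) * kawaharaU2 a b x * cos x =
      ∑ k : Fin 8, ![-(5 / 8) * a ^ 3 - (11 / 16) * a * b ^ 2,
        -(11 / 16) * a ^ 2 * b - (91 / 144) * b ^ 3, -(5 / 8) * a ^ 3 - (25 / 36) * a * b ^ 2,
        -(3 / 4) * a ^ 2 * b - (91 / 144) * b ^ 3, -(11 / 144) * a * b ^ 2,
        -(1 / 16) * a ^ 2 * b - (1 / 144) * b ^ 3, -(5 / 72) * a * b ^ 2,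
        -(1 / 144) * b ^ 3] k * cos ((k : ℕ) * x) := by
  simp only [Fin.sum_univ_succ, Fin.sum_univ_zero, Fin.val_succ, Fin.val_zero, Nat.reduceAdd,
    Matrix.cons_val_zero, Matrix.cons_val_succ]
  simp only [cos_nat_add_two_mul]
  rw [kawaharaU2, cos_two_mul, cos_three_mul, show 4 * x = 2 * (2 * x) by ring, cos_two_mul,
    cos_two_mul]
  push_cast
  simp only [one_mul, zero_mul, cos_zero]
  ring

theorem two_mul_mul_kawaharaU2_mul_cos_two_mul (a b x : ℝ) :
    2 * (a * cos x + b * cos (2 * x)) * kawaharaU2 a b x * cos (2 * x) =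
      ∑ k : Fin 9, ![-(11 / 16) * a ^ 2 * b - (91 / 144) * b ^ 3,
        -(5 / 8) * a ^ 3 - (25 / 36) * a * b ^ 2, -(1 / 16) * a ^ 2 * b,
        -(5 / 8) * a ^ 3 - (109 / 144) * a * b ^ 2, -(11 / 16) * a ^ 2 * b - (23 / 36) * b ^ 3,
        -(1 / 144) * a * b ^ 2, -(1 / 16) * a ^ 2 * b, -(5 / 72) * a * b ^ 2,
        -(1 / 144) * b ^ 3] k * cos ((k : ℕ) * x) := by
  simp only [Fin.sum_univ_succ, Fin.sum_univ_zero, Fin.val_succ, Fin.val_zero, Nat.reduceAdd,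
    Matrix.cons_val_zero, Matrix.cons_val_succ]
  simp only [cos_nat_add_two_mul]
  rw [kawaharaU2, cos_two_mul, cos_three_mul, show 4 * x = 2 * (2 * x) by ring, cos_two_mul,
    cos_two_mul]
  push_cast
  simp only [one_mul, zero_mul, cos_zero]
  ring

/-- The cubic terms of the Lyapunov–Schmidt bifurcation equation for the Kawahara Wilton
ripples with K = 2 (β = 1/5, c₀ = 4/5). -/
theorem kawahara_cubic_terms_K2 (β c₀ : ℝ)
    (hβ : β = 1 / 5) (hc₀ : c₀ = 4 / 5)
    (u200 u110 u020 : ℝ → ℝ)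
    (hu200 : ∀ x : ℝ, u200 x = -1 / (2 * c₀))
    (hu110 : ∀ x : ℝ, u110 x = -Real.cos (3 * x) / (c₀ - 9 + 81 * β))
    (hu020 : ∀ x : ℝ, u020 x =
      -1 / (2 * c₀) - Real.cos (4 * x) / (2 * (c₀ - 16 + 256 * β))) :
    ∀ a b : ℝ,
      (1 / Real.pi) * (∫ x in (-Real.pi)..Real.pi,
          2 * (a * Real.cos x + b * Real.cos (2 * x))
            * (a ^ 2 * u200 x + a * b * u110 x + b ^ 2 * u020 x) * Real.cos x)
        = -(5 / 4) * a ^ 3 - (11 / 8) * a * b ^ 2 ∧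
      (1 / Real.pi) * (∫ x in (-Real.pi)..Real.pi,
          2 * (a * Real.cos x + b * Real.cos (2 * x))
            * (a ^ 2 * u200 x + a * b * u110 x + b ^ 2 * u020 x) * Real.cos (2 * x))
        = -(11 / 8) * a ^ 2 * b - (91 / 72) * b ^ 3 := by
  intro a b
  have hu (x : ℝ) : a ^ 2 * u200 x + a * b * u110 x + b ^ 2 * u020 x = kawaharaU2 a b x := by
    rw [hu200, hu110, hu020, kawaharaU2, hβ, hc₀]
    ring
  simp only [hu, two_mul_mul_kawaharaU2_mul_cos, two_mul_mul_kawaharaU2_mul_cos_two_mul,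
    integral_sum_cos_nat_mul, Matrix.cons_val_zero]
  constructor <;> field_simp <;> ring
end

section
/- Let K = 3, β = 1/10, c₀ = 9/10, and let u₂₀₀(x) = −1/(2c₀) − cos(2x)/(2(c₀ − 4 + 16β)), u₁₁₀(x) = −cos(2x)/(c₀ − 4 + 16β) − cos(4x)/(c₀ − 16 + 256β), u₀₂₀(x) = −1/(2c₀) − cos(6x)/(2(c₀ − 36 + 1296β)). Then for all a, b ∈ ℝ: (1/π)∫_{−π}^{π} 2(a·cos(x) + b·cos(3x))·(a²·u₂₀₀(x) + ab·u₁₁₀(x) + b²·u₀₂₀(x))·cos(x) dx = −(7/9)a³ + a²b − (34/63)ab², and (1/π)∫_{−π}^{π} 2(a·cos(x) + b·cos(3x))·(a²·u₂₀₀(x) + ab·u₁₁₀(x) + b²·u₀₂₀(x))·cos(3x) dx = (1/3)a³ − (34/63)a²b − (211/189)b³. -/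
open Real Finset

/-!
Both `2 (a cos x + b cos 3x) cos kx` (by product-to-sum) and `a² u₂₀₀ + ab u₁₁₀ + b² u₀₂₀` are
cosine polynomials of degree at most 6. By the orthogonality of the `cos mx` on `[-π, π]`, the
normalized integral of their product is the sum of the products of matching coefficients, with the
constant terms counted twice.
-/

theorem integral_cos_int_mul (k : ℤ) :
    ∫ x in -π..π, cos (k * x) = if k = 0 then 2 * π else 0 := by
  split_ifs with hk
  · simp only [hk, Int.cast_zero, zero_mul, cos_zero, intervalIntegral.integral_const,
      sub_neg_eq_add, smul_eq_mul, mul_one]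
    ring
  · have hk' : (k : ℝ) ≠ 0 := by exact_mod_cast hk
    rw [intervalIntegral.integral_comp_mul_left (fun x => cos x) hk', integral_cos,
      mul_neg, sin_neg, sin_int_mul_pi]
    simp

theorem integral_cos_nat_mul_mul_cos_nat_mul (m n : ℕ) :
    ∫ x in -π..π, cos (m * x) * cos (n * x) =
      π * ((if m = n then 1 else 0) + if m = 0 ∧ n = 0 then 1 else 0) := by
  have h_prod_to_sum : ∀ x : ℝ, cos (m * x) * cos (n * x) =
      (cos (((m - n : ℤ) : ℝ) * x) + cos (((m + n : ℤ) : ℝ) * x)) / 2 := by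
    intro x
    push_cast
    rw [sub_mul, add_mul, cos_sub, cos_add]
    ring
  simp_rw [h_prod_to_sum]
  rw [intervalIntegral.integral_div, intervalIntegral.integral_add
    ((by fun_prop : Continuous _).intervalIntegrable _ _)
    ((by fun_prop : Continuous _).intervalIntegrable _ _)]
  simp only [integral_cos_int_mul]
  split_ifs <;> first | (exfalso; omega) | ring

noncomputable def cosPoly {n : ℕ} (c : Fin n → ℝ) (x : ℝ) : ℝ := ∑ k, c k * cos (k * x)

theorem integral_cosPoly_mul_cosPoly {n : ℕ} (c d : Fin (n + 1) → ℝ) :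
    ∫ x in -π..π, cosPoly c x * cosPoly d x = π * (c 0 * d 0 + ∑ k, c k * d k) := by
  have h_expand : ∀ x, cosPoly c x * cosPoly d x =
      ∑ i, ∑ j, c i * d j * (cos ((i : ℕ) * x) * cos ((j : ℕ) * x)) := by
    intro x
    simp only [cosPoly, sum_mul_sum]
    exact sum_congr rfl fun i _ => sum_congr rfl fun j _ => by ring
  have h_row : ∀ i : Fin (n + 1),
      ∫ x in -π..π, ∑ j, c i * d j * (cos ((i : ℕ) * x) * cos ((j : ℕ) * x)) =
        ∑ j, c i * d j *
          (π * ((if (i : ℕ) = j then 1 else 0) + if (i : ℕ) = 0 ∧ (j : ℕ) = 0 then 1 else 0)) := by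
    intro i
    rw [intervalIntegral.integral_finsetSum fun j _ =>
      (by fun_prop : Continuous _).intervalIntegrable _ _]
    simp_rw [intervalIntegral.integral_const_mul, integral_cos_nat_mul_mul_cos_nat_mul]
  simp_rw [h_expand]
  rw [intervalIntegral.integral_finsetSum fun i _ =>
    (continuous_finsetSum _ fun j _ => by fun_prop).intervalIntegrable _ _]
  simp_rw [h_row]
  simp only [Fin.ext_iff.symm, Fin.val_eq_zero_iff, ite_and, mul_add, mul_ite, mul_one, mul_zero,
    sum_add_distrib, sum_ite_eq, mem_univ, ↓reduceIte, sum_ite_irrel, sum_ite_eq', sum_const_zero,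
    ← sum_mul]
  ring

theorem one_div_pi_mul_integral_cosPoly_mul_cosPoly {n : ℕ} (c d : Fin (n + 1) → ℝ) :
    1 / π * ∫ x in -π..π, cosPoly c x * cosPoly d x = c 0 * d 0 + ∑ k, c k * d k := by
  rw [integral_cosPoly_mul_cosPoly, one_div, inv_mul_cancel_left₀ pi_ne_zero]

theorem cosPoly_seven (c₀ c₁ c₂ c₃ c₄ c₅ c₆ x : ℝ) :
    cosPoly ![c₀, c₁, c₂, c₃, c₄, c₅, c₆] x =
      c₀ + c₁ * cos x + c₂ * cos (2 * x) + c₃ * cos (3 * x) + c₄ * cos (4 * x) +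
        c₅ * cos (5 * x) + c₆ * cos (6 * x) := by
  simp [cosPoly, Fin.sum_univ_seven]

theorem two_mul_cos_add_cos_three_mul_mul_cos (a b x : ℝ) :
    2 * (a * cos x + b * cos (3 * x)) * cos x = cosPoly ![a, 0, a + b, 0, b, 0, 0] x := by
  have h₁ : 2 * cos x * cos x = 1 + cos (2 * x) := by
    rw [two_mul_cos_mul_cos, sub_self, cos_zero, two_mul]
  have h₃ : 2 * cos (3 * x) * cos x = cos (2 * x) + cos (4 * x) := by
    rw [two_mul_cos_mul_cos]
    ring_nf
  rw [cosPoly_seven]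
  linear_combination a * h₁ + b * h₃

theorem two_mul_cos_add_cos_three_mul_mul_cos_three_mul (a b x : ℝ) :
    2 * (a * cos x + b * cos (3 * x)) * cos (3 * x) = cosPoly ![b, 0, a, 0, a, 0, b] x := by
  have h₁ : 2 * cos (3 * x) * cos x = cos (2 * x) + cos (4 * x) := by
    rw [two_mul_cos_mul_cos]
    ring_nf
  have h₃ : 2 * cos (3 * x) * cos (3 * x) = 1 + cos (6 * x) := by
    rw [two_mul_cos_mul_cos, sub_self, cos_zero]
    ring_nf
  rw [cosPoly_seven]
  linear_combination a * h₁ + b * h₃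

/-- The cubic terms of the Lyapunov–Schmidt bifurcation equation for the Kawahara Wilton
ripples with K = 3 (β = 1/10, c₀ = 9/10). -/
theorem kawahara_cubic_terms_K3 (β c₀ : ℝ)
    (hβ : β = 1 / 10) (hc₀ : c₀ = 9 / 10)
    (u200 u110 u020 : ℝ → ℝ)
    (hu200 : ∀ x : ℝ, u200 x =
      -1 / (2 * c₀) - Real.cos (2 * x) / (2 * (c₀ - 4 + 16 * β)))
    (hu110 : ∀ x : ℝ, u110 x =
      -Real.cos (2 * x) / (c₀ - 4 + 16 * β) - Real.cos (4 * x) / (c₀ - 16 + 256 * β))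
    (hu020 : ∀ x : ℝ, u020 x =
      -1 / (2 * c₀) - Real.cos (6 * x) / (2 * (c₀ - 36 + 1296 * β))) :
    ∀ a b : ℝ,
      (1 / Real.pi) * (∫ x in (-Real.pi)..Real.pi,
          2 * (a * Real.cos x + b * Real.cos (3 * x))
            * (a ^ 2 * u200 x + a * b * u110 x + b ^ 2 * u020 x) * Real.cos x)
        = -(7 / 9) * a ^ 3 + a ^ 2 * b - (34 / 63) * a * b ^ 2 ∧
      (1 / Real.pi) * (∫ x in (-Real.pi)..Real.pi,
          2 * (a * Real.cos x + b * Real.cos (3 * x))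
            * (a ^ 2 * u200 x + a * b * u110 x + b ^ 2 * u020 x) * Real.cos (3 * x))
        = (1 / 3) * a ^ 3 - (34 / 63) * a ^ 2 * b - (211 / 189) * b ^ 3 := by
  subst hβ hc₀
  intro a b
  have hu : ∀ x, a ^ 2 * u200 x + a * b * u110 x + b ^ 2 * u020 x =
      cosPoly ![-5 / 9 * (a ^ 2 + b ^ 2), 0, a ^ 2 / 3 + 2 / 3 * a * b, 0, -2 / 21 * a * b, 0,
        -b ^ 2 / 189] x := by
    intro x
    rw [cosPoly_seven, hu200, hu110, hu020]
    ring
  constructor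
  · rw [intervalIntegral.integral_congr fun x _ => by
      rw [mul_right_comm, two_mul_cos_add_cos_three_mul_mul_cos, hu],
      one_div_pi_mul_integral_cosPoly_mul_cosPoly]
    simp only [Fin.sum_univ_succ, Fin.sum_univ_zero, Matrix.cons_val_zero, Matrix.cons_val_succ]
    ring
  · rw [intervalIntegral.integral_congr fun x _ => by
      rw [mul_right_comm, two_mul_cos_add_cos_three_mul_mul_cos_three_mul, hu],
      one_div_pi_mul_integral_cosPoly_mul_cosPoly]
    simp only [Fin.sum_univ_succ, Fin.sum_univ_zero, Matrix.cons_val_zero, Matrix.cons_val_succ]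
    ring
end

section
/- The polynomial p(t) = 109t³ + 189t² − 45t − 63 has exactly three real roots t₁ < t₂ < t₃, and they satisfy t₁ ∈ (−1.79, −1.78), t₂ ∈ (−0.55, −0.54), t₃ ∈ (0.59, 0.60). Moreover, none of the roots equals −34/63, i.e., p(−34/63) ≠ 0. -/
set_option maxHeartbeats 1000000

private lemma cubic_cont : Continuous (fun t : ℝ => 109 * t ^ 3 + 189 * t ^ 2 - 45 * t - 63) := by
  fun_prop

private lemma root_in (a b : ℝ) (hab : a ≤ b)
    (ha : 109 * a ^ 3 + 189 * a ^ 2 - 45 * a - 63 < 0)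
    (hb : 0 < 109 * b ^ 3 + 189 * b ^ 2 - 45 * b - 63) :
    ∃ t ∈ Set.Ioo a b, 109 * t ^ 3 + 189 * t ^ 2 - 45 * t - 63 = 0 := by
  have h := intermediate_value_Ioo hab cubic_cont.continuousOn (Set.mem_Ioo.mpr ⟨ha, hb⟩)
  obtain ⟨t, ht, h0⟩ := h
  exact ⟨t, ht, h0⟩

private lemma root_in' (a b : ℝ) (hab : a ≤ b)
    (ha : 0 < 109 * a ^ 3 + 189 * a ^ 2 - 45 * a - 63)
    (hb : 109 * b ^ 3 + 189 * b ^ 2 - 45 * b - 63 < 0) :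
    ∃ t ∈ Set.Ioo a b, 109 * t ^ 3 + 189 * t ^ 2 - 45 * t - 63 = 0 := by
  have h := intermediate_value_Ioo' hab cubic_cont.continuousOn (Set.mem_Ioo.mpr ⟨hb, ha⟩)
  obtain ⟨t, ht, h0⟩ := h
  exact ⟨t, ht, h0⟩

/-- The cubic 109t³ + 189t² − 45t − 63 has exactly three real roots, located in the stated
intervals, and −34/63 is not one of them. -/
theorem kawahara_K3_cubic_roots :
    ∃ t₁ t₂ t₃ : ℝ, t₁ < t₂ ∧ t₂ < t₃ ∧
      (109 * t₁ ^ 3 + 189 * t₁ ^ 2 - 45 * t₁ - 63 = 0) ∧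
      (109 * t₂ ^ 3 + 189 * t₂ ^ 2 - 45 * t₂ - 63 = 0) ∧
      (109 * t₃ ^ 3 + 189 * t₃ ^ 2 - 45 * t₃ - 63 = 0) ∧
      (∀ t : ℝ, 109 * t ^ 3 + 189 * t ^ 2 - 45 * t - 63 = 0 →
        t = t₁ ∨ t = t₂ ∨ t = t₃) ∧
      t₁ ∈ Set.Ioo (-1.79 : ℝ) (-1.78) ∧
      t₂ ∈ Set.Ioo (-0.55 : ℝ) (-0.54) ∧
      t₃ ∈ Set.Ioo (0.59 : ℝ) 0.60 ∧
      109 * (-34 / 63 : ℝ) ^ 3 + 189 * (-34 / 63 : ℝ) ^ 2 - 45 * (-34 / 63 : ℝ) - 63 ≠ 0 := by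
  obtain ⟨t₁, ht₁, he₁⟩ := root_in (-1.79) (-1.78) (by norm_num) (by norm_num) (by norm_num)
  obtain ⟨t₂, ht₂, he₂⟩ := root_in' (-0.55) (-0.54) (by norm_num) (by norm_num) (by norm_num)
  obtain ⟨t₃, ht₃, he₃⟩ := root_in (0.59) (0.60) (by norm_num) (by norm_num) (by norm_num)
  have h12 : t₁ < t₂ := lt_of_lt_of_le ht₁.2 (by linarith [ht₂.1] : (-1.78 : ℝ) ≤ t₂)
  have h23 : t₂ < t₃ := lt_of_lt_of_le ht₂.2 (by linarith [ht₃.1] : (-0.54 : ℝ) ≤ t₃)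
  refine ⟨t₁, t₂, t₃, h12, h23, he₁, he₂, he₃, ?_, ht₁, ht₂, ht₃, by norm_num⟩
  intro t ht
  by_contra hc
  push_neg at hc
  obtain ⟨hn1, hn2, hn3⟩ := hc
  have q1 : 109 * (t ^ 2 + t * t₁ + t₁ ^ 2) + 189 * (t + t₁) - 45 = 0 := by
    have hne : t - t₁ ≠ 0 := sub_ne_zero.mpr hn1
    have : (t - t₁) * (109 * (t ^ 2 + t * t₁ + t₁ ^ 2) + 189 * (t + t₁) - 45) = 0 := by ring_nf; nlinarith [ht, he₁]
    rcases mul_eq_zero.mp this with h | h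
    · exact absurd h hne
    · exact h
  have q2 : 109 * (t ^ 2 + t * t₂ + t₂ ^ 2) + 189 * (t + t₂) - 45 = 0 := by
    have hne : t - t₂ ≠ 0 := sub_ne_zero.mpr hn2
    have : (t - t₂) * (109 * (t ^ 2 + t * t₂ + t₂ ^ 2) + 189 * (t + t₂) - 45) = 0 := by ring_nf; nlinarith [ht, he₂]
    rcases mul_eq_zero.mp this with h | h
    · exact absurd h hne
    · exact h
  have q3 : 109 * (t ^ 2 + t * t₃ + t₃ ^ 2) + 189 * (t + t₃) - 45 = 0 := by
    have hne : t - t₃ ≠ 0 := sub_ne_zero.mpr hn3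
    have : (t - t₃) * (109 * (t ^ 2 + t * t₃ + t₃ ^ 2) + 189 * (t + t₃) - 45) = 0 := by ring_nf; nlinarith [ht, he₃]
    rcases mul_eq_zero.mp this with h | h
    · exact absurd h hne
    · exact h
  -- q1 - q2 : (t₁ - t₂)(109(t + t₁ + t₂) + 189) = 0, t₁ ≠ t₂ so 109(t+t₁+t₂)+189=0
  have l12 : 109 * (t + t₁ + t₂) + 189 = 0 := by
    have hne : t₁ - t₂ ≠ 0 := sub_ne_zero.mpr h12.ne
    have : (t₁ - t₂) * (109 * (t + t₁ + t₂) + 189) = 0 := by nlinarith [q1, q2]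
    rcases mul_eq_zero.mp this with h | h
    · exact absurd h hne
    · exact h
  have l13 : 109 * (t + t₁ + t₃) + 189 = 0 := by
    have hne : t₁ - t₃ ≠ 0 := sub_ne_zero.mpr (h12.trans h23).ne
    have : (t₁ - t₃) * (109 * (t + t₁ + t₃) + 189) = 0 := by nlinarith [q1, q3]
    rcases mul_eq_zero.mp this with h | h
    · exact absurd h hne
    · exact h
  have : t₂ = t₃ := by linarith
  exact absurd this h23.ne
end

section
/- For (t, s) ∈ ℝ², the system of equations −7/9 + s + t − (34/63)t² = 0 and 1/3 − (34/63)t + t·s − (211/189)t³ = 0 holds if and only if s = 7/9 − t + (34/63)t² and 109t³ + 189t² − 45t − 63 = 0. In particular, the system has exactly three real solutions (t, s), one for each real root t of 109t³ + 189t² − 45t − 63. -/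
open Polynomial Set

private noncomputable def kawP : Polynomial ℝ :=
  C 109 * X ^ 3 + C 189 * X ^ 2 - C 45 * X - C 63

private lemma kawP_natDegree : kawP.natDegree = 3 := by
  unfold kawP; compute_degree!

private lemma kawP_ne_zero : kawP ≠ 0 := by
  intro h
  have := kawP_natDegree
  rw [h] at this
  simp at this

private lemma kawP_isRoot {t : ℝ} (h : 109 * t ^ 3 + 189 * t ^ 2 - 45 * t - 63 = 0) :
    t ∈ kawP.roots := by
  rw [mem_roots kawP_ne_zero]
  simp [kawP, IsRoot, eval_pow]
  linarith

private lemma kaw_equiv (t s : ℝ) :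
      (-7 / 9 + s + t - (34 / 63) * t ^ 2 = 0 ∧
        1 / 3 - (34 / 63) * t + t * s - (211 / 189) * t ^ 3 = 0) ↔
      (s = 7 / 9 - t + (34 / 63) * t ^ 2 ∧
        109 * t ^ 3 + 189 * t ^ 2 - 45 * t - 63 = 0) := by
  constructor
  · rintro ⟨h1, h2⟩
    constructor
    · linarith
    · linear_combination (189 * t) * h1 - 189 * h2
  · rintro ⟨hs, hc⟩
    subst hs
    constructor
    · ring
    · linear_combination (-(1 : ℝ) / 189) * hc

private lemma kaw_root_exists (a b : ℝ) (hab : a ≤ b)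
    (h : (0 : ℝ) ∈ Set.Icc (109 * a ^ 3 + 189 * a ^ 2 - 45 * a - 63)
      (109 * b ^ 3 + 189 * b ^ 2 - 45 * b - 63)) :
    ∃ t ∈ Set.Icc a b, 109 * t ^ 3 + 189 * t ^ 2 - 45 * t - 63 = 0 := by
  have hc : ContinuousOn (fun t : ℝ => 109 * t ^ 3 + 189 * t ^ 2 - 45 * t - 63) (Set.Icc a b) := by
    fun_prop
  obtain ⟨t, ht, htv⟩ := intermediate_value_Icc hab hc h
  exact ⟨t, ht, htv⟩

private lemma kaw_root_exists' (a b : ℝ) (hab : a ≤ b)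
    (h : (0 : ℝ) ∈ Set.Icc (109 * b ^ 3 + 189 * b ^ 2 - 45 * b - 63)
      (109 * a ^ 3 + 189 * a ^ 2 - 45 * a - 63)) :
    ∃ t ∈ Set.Icc a b, 109 * t ^ 3 + 189 * t ^ 2 - 45 * t - 63 = 0 := by
  have hc : ContinuousOn (fun t : ℝ => 109 * t ^ 3 + 189 * t ^ 2 - 45 * t - 63) (Set.Icc a b) := by
    fun_prop
  obtain ⟨t, ht, htv⟩ := intermediate_value_Icc' hab hc h
  exact ⟨t, ht, htv⟩

/-- The leading-order bifurcation system for the Kawahara Wilton ripples with K = 3 is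
equivalent to the cubic 109t³ + 189t² − 45t − 63 = 0 together with the formula for s;
in particular it has exactly three real solutions, one for each real root of the cubic. -/
theorem kawahara_K3_leading_bifurcation_system :
    (∀ t s : ℝ,
      (-7 / 9 + s + t - (34 / 63) * t ^ 2 = 0 ∧
        1 / 3 - (34 / 63) * t + t * s - (211 / 189) * t ^ 3 = 0) ↔
      (s = 7 / 9 - t + (34 / 63) * t ^ 2 ∧
        109 * t ^ 3 + 189 * t ^ 2 - 45 * t - 63 = 0)) ∧
    ∃ S : Finset (ℝ × ℝ), S.card = 3 ∧
      (∀ p : ℝ × ℝ, p ∈ S ↔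
        (-7 / 9 + p.2 + p.1 - (34 / 63) * p.1 ^ 2 = 0 ∧
          1 / 3 - (34 / 63) * p.1 + p.1 * p.2 - (211 / 189) * p.1 ^ 3 = 0)) := by
  refine ⟨kaw_equiv, ?_⟩
  obtain ⟨t₁, ht₁, hr₁⟩ := kaw_root_exists (-2) (-1) (by norm_num) (by norm_num)
  obtain ⟨t₂, ht₂, hr₂⟩ := kaw_root_exists' (-1) 0 (by norm_num) (by norm_num)
  obtain ⟨t₃, ht₃, hr₃⟩ := kaw_root_exists 0 1 (by norm_num) (by norm_num)
  have hne1 : t₁ ≠ -1 := by rintro rfl; norm_num at hr₁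
  have hne2 : t₂ ≠ 0 := by rintro rfl; norm_num at hr₂
  have h12 : t₁ < t₂ := lt_of_lt_of_le (lt_of_le_of_ne ht₁.2 hne1) ht₂.1
  have h23 : t₂ < t₃ := lt_of_lt_of_le (lt_of_le_of_ne ht₂.2 hne2) ht₃.1
  have h13 : t₁ < t₃ := h12.trans h23
  -- every root of the cubic is one of t₁, t₂, t₃
  have hall : ∀ u : ℝ, 109 * u ^ 3 + 189 * u ^ 2 - 45 * u - 63 = 0 →
      u = t₁ ∨ u = t₂ ∨ u = t₃ := by
    intro u hu
    by_contra hc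
    push_neg at hc
    obtain ⟨hu1, hu2, hu3⟩ := hc
    have hsub : ({u, t₁, t₂, t₃} : Finset ℝ) ⊆ kawP.roots.toFinset := by
      intro x hx
      simp only [Finset.mem_insert, Finset.mem_singleton] at hx
      rw [Multiset.mem_toFinset]
      rcases hx with rfl | rfl | rfl | rfl
      · exact kawP_isRoot hu
      · exact kawP_isRoot hr₁
      · exact kawP_isRoot hr₂
      · exact kawP_isRoot hr₃
    have hcard : ({u, t₁, t₂, t₃} : Finset ℝ).card = 4 := by
      rw [Finset.card_insert_of_notMem, Finset.card_insert_of_notMem,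
        Finset.card_insert_of_notMem, Finset.card_singleton]
      · simp [h23.ne]
      · simp [h12.ne, h13.ne]
      · simp [hu1, hu2, hu3]
    have h4 : (4 : ℕ) ≤ kawP.roots.toFinset.card := hcard ▸ Finset.card_le_card hsub
    have h3 : kawP.roots.toFinset.card ≤ 3 := by
      calc kawP.roots.toFinset.card ≤ Multiset.card kawP.roots := Multiset.toFinset_card_le _
        _ ≤ kawP.natDegree := kawP.card_roots'
        _ = 3 := kawP_natDegree
    omega
  refine ⟨{(t₁, 7 / 9 - t₁ + (34 / 63) * t₁ ^ 2), (t₂, 7 / 9 - t₂ + (34 / 63) * t₂ ^ 2),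
    (t₃, 7 / 9 - t₃ + (34 / 63) * t₃ ^ 2)}, ?_, ?_⟩
  · rw [Finset.card_insert_of_notMem, Finset.card_insert_of_notMem, Finset.card_singleton]
    · simp [Prod.ext_iff, h23.ne]
    · simp [Prod.ext_iff, h12.ne, h13.ne]
  · intro p
    simp only [Finset.mem_insert, Finset.mem_singleton]
    rw [kaw_equiv p.1 p.2]
    constructor
    · rintro (rfl | rfl | rfl)
      · exact ⟨rfl, hr₁⟩
      · exact ⟨rfl, hr₂⟩
      · exact ⟨rfl, hr₃⟩
    · rintro ⟨hs, hc⟩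
      rcases hall p.1 hc with h | h | h
      · exact Or.inl (Prod.ext h (by rw [hs, h]))
      · exact Or.inr (Or.inl (Prod.ext h (by rw [hs, h])))
      · exact Or.inr (Or.inr (Prod.ext h (by rw [hs, h])))
end

section
/- For every integer K ≥ 4, define v₃₀₀(K) = −(K²+1)(5K²−24)/(6K²(K²−4)), v₁₂₀(K) = w₂₁₀(K) = −(K²+1)(4K⁴−27K²+4)/(K²(K²−4)(4K²−1)), and w₀₃₀(K) = −(K²+1)(24K²−5)/(6K²(4K²−1)). Then (v₃₀₀(K) − w₂₁₀(K))/(w₀₃₀(K) − v₁₂₀(K)) = −K²(4K²−61)/(61K²−4), and this quantity is negative. Consequently, the only real solution t of the cubic equation (w₀₃₀(K) − v₁₂₀(K))·t³ − (v₃₀₀(K) − w₂₁₀(K))·t = 0 is t = 0. -/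
/-! Over the common denominator 6K²(K² − 4)(4K² − 1) both differences v₃₀₀ − v₁₂₀ and
w₀₃₀ − v₁₂₀ carry the factor K² + 1, which cancels in their ratio; the ratio is negative once
4K² > 61. A nonzero root of a·t³ − b·t would satisfy t² = b / a, impossible when b / a < 0. -/

noncomputable section

namespace Kawahara

def v300 (k : ℝ) : ℝ := -((k ^ 2 + 1) * (5 * k ^ 2 - 24)) / (6 * k ^ 2 * (k ^ 2 - 4))

def v120 (k : ℝ) : ℝ :=
  -((k ^ 2 + 1) * (4 * k ^ 4 - 27 * k ^ 2 + 4)) / (k ^ 2 * (k ^ 2 - 4) * (4 * k ^ 2 - 1))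

def w030 (k : ℝ) : ℝ := -((k ^ 2 + 1) * (24 * k ^ 2 - 5)) / (6 * k ^ 2 * (4 * k ^ 2 - 1))

variable {k : ℝ}

theorem v300_sub_v120 (h0 : k ≠ 0) (h2 : k ^ 2 - 4 ≠ 0) (h1 : 4 * k ^ 2 - 1 ≠ 0) :
    v300 k - v120 k = (k ^ 2 + 1) * (4 * k ^ 2 - 61) / (6 * (k ^ 2 - 4) * (4 * k ^ 2 - 1)) := by
  unfold v300 v120
  rw [div_sub_div _ _ (by simp [*]) (by simp [*]), div_eq_div_iff (by simp [*]) (by simp [*])]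
  ring

theorem w030_sub_v120 (h0 : k ≠ 0) (h2 : k ^ 2 - 4 ≠ 0) :
    w030 k - v120 k =
      -((k ^ 2 + 1) * (61 * k ^ 2 - 4)) / (6 * k ^ 2 * (k ^ 2 - 4) * (4 * k ^ 2 - 1)) := by
  unfold w030 v120
  field_simp
  ring

theorem v300_sub_v120_div_w030_sub_v120 (h0 : k ≠ 0) (h2 : k ^ 2 - 4 ≠ 0)
    (h1 : 4 * k ^ 2 - 1 ≠ 0) (h61 : 61 * k ^ 2 - 4 ≠ 0) :
    (v300 k - v120 k) / (w030 k - v120 k) = -(k ^ 2 * (4 * k ^ 2 - 61)) / (61 * k ^ 2 - 4) := by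
  have hk1 : k ^ 2 + 1 ≠ 0 := by positivity
  rw [v300_sub_v120 h0 h2 h1, w030_sub_v120 h0 h2, div_div_div_eq,
    div_eq_div_iff (by simp [*]) h61]
  ring

theorem ratio_neg (hk : 61 / 4 < k ^ 2) : -(k ^ 2 * (4 * k ^ 2 - 61)) / (61 * k ^ 2 - 4) < 0 :=
  div_neg_of_neg_of_pos (by nlinarith) (by linarith)

end Kawahara

end

theorem eq_zero_of_mul_pow_three_sub_mul_eq_zero {α : Type*} [Field α] [LinearOrder α]
    [IsStrictOrderedRing α] {a b t : α} (hba : b / a < 0) (h : a * t ^ 3 - b * t = 0) : t = 0 := by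
  by_contra ht
  have ha : a ≠ 0 := by rintro rfl; simp at hba
  have hfactor : t * (a * t ^ 2 - b) = 0 := by rw [← h]; ring
  have hroot : a * t ^ 2 = b := sub_eq_zero.mp ((mul_eq_zero.mp hfactor).resolve_left ht)
  rw [← hroot, mul_div_cancel_left₀ _ ha] at hba
  exact (sq_nonneg t).not_gt hba

/-- For K ≥ 4, the ratio (v₃₀₀ − w₂₁₀)/(w₀₃₀ − v₁₂₀) equals −K²(4K²−61)/(61K²−4) and is
negative, so the cubic (w₀₃₀ − v₁₂₀)t³ − (v₃₀₀ − w₂₁₀)t has t = 0 as its only real root. -/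
theorem kawahara_K_ge_4_cubic_only_trivial_root (K : ℕ) (hK : 4 ≤ K)
    (v300 v120 w210 w030 : ℝ)
    (hv300 : v300 = -(((K : ℝ) ^ 2 + 1) * (5 * (K : ℝ) ^ 2 - 24))
      / (6 * (K : ℝ) ^ 2 * ((K : ℝ) ^ 2 - 4)))
    (hv120 : v120 = -(((K : ℝ) ^ 2 + 1) * (4 * (K : ℝ) ^ 4 - 27 * (K : ℝ) ^ 2 + 4))
      / ((K : ℝ) ^ 2 * ((K : ℝ) ^ 2 - 4) * (4 * (K : ℝ) ^ 2 - 1)))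
    (hw210 : w210 = v120)
    (hw030 : w030 = -(((K : ℝ) ^ 2 + 1) * (24 * (K : ℝ) ^ 2 - 5))
      / (6 * (K : ℝ) ^ 2 * (4 * (K : ℝ) ^ 2 - 1))) :
    (v300 - w210) / (w030 - v120)
      = -((K : ℝ) ^ 2 * (4 * (K : ℝ) ^ 2 - 61)) / (61 * (K : ℝ) ^ 2 - 4) ∧
    (v300 - w210) / (w030 - v120) < 0 ∧
    (∀ t : ℝ, (w030 - v120) * t ^ 3 - (v300 - w210) * t = 0 → t = 0) := by
  obtain rfl : v300 = Kawahara.v300 K := hv300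
  obtain rfl : v120 = Kawahara.v120 K := hv120
  obtain rfl : w030 = Kawahara.w030 K := hw030
  subst hw210
  have hk : (4 : ℝ) ≤ K := by exact_mod_cast hK
  have hratio := Kawahara.v300_sub_v120_div_w030_sub_v120 (k := K)
    (by positivity) (by nlinarith) (by nlinarith) (by nlinarith)
  have hneg : (Kawahara.v300 K - Kawahara.v120 K) / (Kawahara.w030 K - Kawahara.v120 K) < 0 :=
    hratio ▸ Kawahara.ratio_neg (by nlinarith)
  exact ⟨hratio, hneg, fun t ht => eq_zero_of_mul_pow_three_sub_mul_eq_zero hneg ht⟩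
end
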